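/- arXiv:2503.13977 — 3 statements merged into one kernel-verified Lean document; each statement's English description precedes it below -/
import Mathlib

section
/- Let B : H₊ → H₋ be a bounded linear operator with ‖B‖ ≤ 1, and define the bounded operator 𝔅 on H₊ × H₋ by 𝔅(x, y) := (x + B*y, Bx + y). Then 𝔅 is bijective (equivalently, boundedly invertible) if and only if ‖B‖ < 1. -/
/-!
Write `𝔅 = 1 + D` with `D (x, y) = (B* y, B x)`. Since `‖D‖ ≤ ‖B‖`, the Neumann series inverts `𝔅`
when `‖B‖ < 1`. Conversely `𝔅 (x, -B x) = (x - B* B x, 0)`, so a bounded inverse of `𝔅` gives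
`‖x‖ ≤ K ‖x - B* B x‖`; as `‖B* B x‖ ≤ ‖B x‖`, the right side squared is at most
`K² (‖x‖² - ‖B x‖²)`, which forces `‖B x‖² ≤ K² / (1 + K²) ‖x‖²`.
-/

open ContinuousLinearMap

namespace ContinuousLinearMap

variable {𝕜 E F : Type*} [RCLike 𝕜]
  [NormedAddCommGroup E] [InnerProductSpace 𝕜 E] [CompleteSpace E]
  [NormedAddCommGroup F] [InnerProductSpace 𝕜 F] [CompleteSpace F]

/-- The operator matrix `[[0, B*], [B, 0]]` on `E × F`. -/
noncomputable def hermitianDilation (B : E →L[𝕜] F) : E × F →L[𝕜] E × F :=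
  (adjoint B ∘L snd 𝕜 E F).prod (B ∘L fst 𝕜 E F)

@[simp]
lemma hermitianDilation_apply (B : E →L[𝕜] F) (p : E × F) :
    hermitianDilation B p = (adjoint B p.2, B p.1) :=
  rfl

lemma norm_hermitianDilation_le (B : E →L[𝕜] F) : ‖hermitianDilation B‖ ≤ ‖B‖ := by
  refine opNorm_le_bound _ (norm_nonneg B) fun p => ?_
  rw [hermitianDilation_apply, Prod.norm_def]
  refine max_le ?_ ?_
  · calc ‖adjoint B p.2‖ ≤ ‖adjoint B‖ * ‖p.2‖ := le_opNorm _ _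
      _ ≤ ‖B‖ * ‖p‖ := by rw [adjoint.norm_map]; gcongr; exact _root_.norm_snd_le p
  · calc ‖B p.1‖ ≤ ‖B‖ * ‖p.1‖ := le_opNorm _ _
      _ ≤ ‖B‖ * ‖p‖ := by gcongr; exact _root_.norm_fst_le p

lemma isUnit_one_add_hermitianDilation {B : E →L[𝕜] F} (hB : ‖B‖ < 1) :
    IsUnit (1 + hermitianDilation B) := by
  rw [← sub_neg_eq_add]
  refine isUnit_one_sub_of_norm_lt_one ?_
  rw [norm_neg]
  exact (norm_hermitianDilation_le B).trans_lt hB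

lemma norm_sub_adjoint_apply_apply_sq_le {B : E →L[𝕜] F} (hB : ‖B‖ ≤ 1) (x : E) :
    ‖x - adjoint B (B x)‖ ^ 2 ≤ ‖x‖ ^ 2 - ‖B x‖ ^ 2 := by
  have hBB : ‖adjoint B (B x)‖ ≤ ‖B x‖ :=
    (le_opNorm _ _).trans (mul_le_of_le_one_left (norm_nonneg _) (by rwa [adjoint.norm_map]))
  rw [norm_sub_sq (𝕜 := 𝕜), adjoint_inner_right, inner_self_eq_norm_sq]
  nlinarith [norm_nonneg (adjoint B (B x))]

lemma norm_lt_one_of_le_mul_norm_sub_adjoint_apply_apply {B : E →L[𝕜] F} (hB : ‖B‖ ≤ 1)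
    (K : ℝ) (hK : ∀ x, ‖x‖ ≤ K * ‖x - adjoint B (B x)‖) : ‖B‖ < 1 := by
  have hr : √(K ^ 2 / (1 + K ^ 2)) < 1 := by
    rw [Real.sqrt_lt' one_pos, one_pow, div_lt_one (by positivity)]
    linarith
  refine (opNorm_le_bound B (Real.sqrt_nonneg _) fun x => ?_).trans_lt hr
  have hsq : ‖B x‖ ^ 2 ≤ (√(K ^ 2 / (1 + K ^ 2)) * ‖x‖) ^ 2 := by
    rw [mul_pow, Real.sq_sqrt (by positivity), div_mul_eq_mul_div, le_div_iff₀ (by positivity)]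
    have ht := norm_sub_adjoint_apply_apply_sq_le hB x
    nlinarith [mul_self_le_mul_self (norm_nonneg x) (hK x),
      mul_le_mul_of_nonneg_left ht (sq_nonneg K), sq_nonneg ‖x - adjoint B (B x)‖]
  exact (pow_le_pow_iff_left₀ (norm_nonneg _) (by positivity) two_ne_zero).mp hsq

end ContinuousLinearMap

/-- For `B : H₊ →L[ℂ] H₋` with `‖B‖ ≤ 1`, the operator
`𝔅(x,y) = (x + B*y, Bx + y)` on `H₊ × H₋` (the operator matrix `[[Id, B*],[B, Id]]`)
is bijective if and only if `‖B‖ < 1`. -/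
theorem operatorMatrix_bijective_iff_norm_lt_one
    {Hp Hm : Type*}
    [NormedAddCommGroup Hp] [InnerProductSpace ℂ Hp] [CompleteSpace Hp]
    [NormedAddCommGroup Hm] [InnerProductSpace ℂ Hm] [CompleteSpace Hm]
    (B : Hp →L[ℂ] Hm) (hB : ‖B‖ ≤ 1) :
    Function.Bijective
        (fun p : Hp × Hm => (p.1 + ContinuousLinearMap.adjoint B p.2, B p.1 + p.2))
      ↔ ‖B‖ < 1 := by
  have h𝔅 : (fun p : Hp × Hm => (p.1 + adjoint B p.2, B p.1 + p.2)) = ⇑(1 + hermitianDilation B) := by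
    ext p <;> simp [add_comm]
  rw [h𝔅]
  refine ⟨fun hbij => ?_, fun hlt => isUnit_iff_bijective.mp (isUnit_one_add_hermitianDilation hlt)⟩
  obtain ⟨-, K, hK⟩ := (bijective_iff_dense_range_and_antilipschitz _).mp hbij
  refine norm_lt_one_of_le_mul_norm_sub_adjoint_apply_apply hB K fun x => ?_
  calc ‖x‖ ≤ ‖(x, -B x)‖ := _root_.norm_fst_le (x, -B x)
    _ ≤ K * ‖(1 + hermitianDilation B) (x, -B x)‖ := bound_of_antilipschitz _ hK _
    _ = K * ‖x - adjoint B (B x)‖ := by simp [sub_eq_add_neg]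
end

section
/- Let T be a contraction on H and let x ∈ K := ker(Id − T*T). Then for every λ ∈ ℂ with |λ| < 1: (i) for every f ∈ K⋆^⊥ one has ⟨Tx, (Id − λ̄T)⁻¹f⟩ = λ⟨x, (Id − λ̄T)⁻¹f⟩; and (ii) for every g ∈ K^⊥ one has ⟨x, (Id − λ̄T*)⁻¹g⟩ = λ⟨Tx, (Id − λ̄T*)⁻¹g⟩. -/
open scoped InnerProductSpace ComplexConjugate
open ContinuousLinearMap

/-! For `x ∈ K` we have `T* T x = x`, hence `T x ∈ K⋆`. Both relations are instances of one
computation: if `S* a = b` and `f = u - λ̄ S u`, then `⟪f, a⟫ = ⟪u, a⟫ - λ ⟪u, b⟫` (Mathlib's inner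
product is conjugate-linear on the left), and `⟪f, a⟫ = 0` by orthogonality. Part (i) takes
`S = T, a = T x, b = x`, part (ii) takes `S = T*, a = x, b = T x`. For `|λ| < 1` the operator
`1 - λ̄ S` is invertible by the Neumann series, so every `f` is of that form. -/

lemma isUnit_one_sub_smul_of_norm_le_one {𝕜 R : Type*} [NormedField 𝕜] [NormedRing R]
    [NormedAlgebra 𝕜 R] [CompleteSpace R] {a : R} (ha : ‖a‖ ≤ 1) {c : 𝕜} (hc : ‖c‖ < 1) :
    IsUnit (1 - c • a) :=
  isUnit_one_sub_of_norm_lt_one <| calc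
    ‖c • a‖ ≤ ‖c‖ * ‖a‖ := norm_smul_le c a
    _ ≤ ‖c‖ * 1 := by gcongr
    _ < 1 := by rwa [mul_one]

section
variable {H : Type*} [NormedAddCommGroup H] [InnerProductSpace ℂ H] [CompleteSpace H]

lemma inner_ringInverse_one_sub_smul_apply_eq_mul_inner {S : H →L[ℂ] H} {c : ℂ}
    (hS : IsUnit (1 - conj c • S)) {a b f : H} (hab : adjoint S a = b) (hf : ⟪f, a⟫_ℂ = 0) :
    ⟪Ring.inverse (1 - conj c • S) f, a⟫_ℂ = c * ⟪Ring.inverse (1 - conj c • S) f, b⟫_ℂ := by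
  set u := Ring.inverse (1 - conj c • S) f
  have hu : u - conj c • S u = f := by
    simpa using congr($(Ring.mul_inverse_cancel _ hS) f)
  have key : ⟪u - conj c • S u, a⟫_ℂ = ⟪u, a⟫_ℂ - c * ⟪u, b⟫_ℂ := by
    rw [inner_sub_left, inner_smul_left, ← adjoint_inner_right S u a, hab, Complex.conj_conj]
  rw [hu, hf] at key
  linear_combination -key

end

/-- Let `T` be a contraction on `H`, `K = ker(Id − T*T)`,
`K⋆ = ker(Id − TT*)`, and `x ∈ K`. Then for every `λ` with `|λ| < 1`:
(i) `⟨Tx, (Id − λ̄T)⁻¹f⟩ = λ⟨x, (Id − λ̄T)⁻¹f⟩` for every `f ∈ K⋆^⊥`, and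
(ii) `⟨x, (Id − λ̄T*)⁻¹g⟩ = λ⟨Tx, (Id − λ̄T*)⁻¹g⟩` for every `g ∈ K^⊥`.
(Paper inner products `⟨·,·⟩` are linear in the first variable, i.e.
`⟨u,v⟩ = ⟪v,u⟫_ℂ` in Mathlib's convention; the inverses are `Ring.inverse`.) -/
theorem unitary_part_eigen_relations
    {H : Type*} [NormedAddCommGroup H] [InnerProductSpace ℂ H] [CompleteSpace H]
    (T : H →L[ℂ] H) (hT : ‖T‖ ≤ 1)
    (K Ks : Submodule ℂ H)
    (hK : K = LinearMap.ker ((1 - adjoint T ∘L T : H →L[ℂ] H) : H →ₗ[ℂ] H))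
    (hKs : Ks = LinearMap.ker ((1 - T ∘L adjoint T : H →L[ℂ] H) : H →ₗ[ℂ] H))
    (x : H) (hx : x ∈ K)
    (lam : ℂ) (hlam : ‖lam‖ < 1) :
    (∀ f ∈ Ksᗮ,
      ⟪Ring.inverse (1 - (conj lam) • T) f, T x⟫_ℂ
        = lam * ⟪Ring.inverse (1 - (conj lam) • T) f, x⟫_ℂ) ∧
    (∀ g ∈ Kᗮ,
      ⟪Ring.inverse (1 - (conj lam) • adjoint T) g, x⟫_ℂ
        = lam * ⟪Ring.inverse (1 - (conj lam) • adjoint T) g, T x⟫_ℂ) := by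
  have hTTx : adjoint T (T x) = x := by
    rw [hK] at hx
    exact (by simpa [sub_eq_zero] using hx : x = _).symm
  have hTx : T x ∈ Ks := by
    rw [hKs]
    simp [hTTx]
  have hlam' : ‖conj lam‖ < 1 := by rwa [Complex.norm_conj]
  refine ⟨fun f hf => ?_, fun g hg => ?_⟩
  · exact inner_ringInverse_one_sub_smul_apply_eq_mul_inner
      (isUnit_one_sub_smul_of_norm_le_one hT hlam')
      hTTx (Submodule.inner_left_of_mem_orthogonal hTx hf)
  · exact inner_ringInverse_one_sub_smul_apply_eq_mul_inner
      (isUnit_one_sub_smul_of_norm_le_one (by rwa [LinearIsometryEquiv.norm_map]) hlam')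
      (by rw [adjoint_adjoint]) (Submodule.inner_left_of_mem_orthogonal hx hg)
end

section
/- Let T be a completely non-unitary contraction on H and let x, y ∈ H. Suppose that for every λ ∈ ℂ with |λ| < 1: (i) ⟨y, (Id − λ̄T)⁻¹f⟩ = λ⟨x, (Id − λ̄T)⁻¹f⟩ for all f ∈ K⋆^⊥, and (ii) ⟨x, (Id − λ̄T*)⁻¹g⟩ = λ⟨y, (Id − λ̄T*)⁻¹g⟩ for all g ∈ K^⊥. Then x ∈ K and y = Tx. -/
open scoped InnerProductSpace ComplexConjugate
open ContinuousLinearMap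

/-!
Read through adjoints, the two hypotheses say that `(1 - λT)⁻¹ (x - λy) ∈ K` and
`(1 - λT*)⁻¹ (y - λx) ∈ K⋆` for `|λ| < 1`. Since `(1 - λA)⁻¹ z = z + λ (1 - λA)⁻¹ (A z)`,
subtracting the value at `0`, dividing by `λ` and letting `λ → 0` peels off one Taylor
coefficient at a time: `x ∈ K`, `Tⁿ (Tx - y) ∈ K`, `y ∈ K⋆` and `T*ⁿ (T*y - x) ∈ K⋆` for all `n`.
The vectors `Tⁿ (Tx - y)` and `-T*ⁿ (T*y - x)` then form a bilateral orbit of `T` inside `K`,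
where `T` is isometric. Their closed span is a subspace on which `T` is unitary, hence it is
zero because `T` is completely non-unitary, and `Tx = y`.
-/

section Resolvent

variable {𝕜 E : Type*} [NontriviallyNormedField 𝕜] [NormedAddCommGroup E] [NormedSpace 𝕜 E]

theorem mem_ker_one_sub_iff (S : E →L[𝕜] E) (v : E) :
    v ∈ LinearMap.ker ((1 - S : E →L[𝕜] E) : E →ₗ[𝕜] E) ↔ S v = v := by
  rw [LinearMap.mem_ker, coe_coe, sub_apply, one_apply_eq_self, sub_eq_zero, eq_comm]

variable [CompleteSpace E] {A : E →L[𝕜] E}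

theorem isUnit_one_sub_smul (hA : ‖A‖ ≤ 1) {c : 𝕜} (hc : ‖c‖ < 1) : IsUnit (1 - c • A) :=
  (Units.oneSub (c • A) ((norm_smul_le c A).trans_lt
    (mul_lt_one_of_nonneg_of_lt_one_left (norm_nonneg c) hc hA))).isUnit

theorem inverse_one_sub_smul_apply (hA : ‖A‖ ≤ 1) {c : 𝕜} (hc : ‖c‖ < 1) (z : E) :
    Ring.inverse (1 - c • A) z = z + c • Ring.inverse (1 - c • A) (A z) := by
  have h := DFunLike.congr_fun (Ring.inverse_mul_cancel _ (isUnit_one_sub_smul hA hc)) z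
  simp only [mul_apply_eq_comp, one_apply_eq_self, sub_apply, smul_apply, map_sub, map_smul] at h
  rw [← sub_eq_iff_eq_add, h]

theorem tendsto_inverse_one_sub_smul_apply (A : E →L[𝕜] E) (z : E) :
    Filter.Tendsto (fun c : 𝕜 => Ring.inverse (1 - c • A) z) (nhds 0) (nhds z) := by
  have hinv : ContinuousAt Ring.inverse (1 - (0 : 𝕜) • A) := by
    rw [zero_smul, sub_zero]
    exact NormedRing.inverse_continuousAt (1 : (E →L[𝕜] E)ˣ)
  have hcont : ContinuousAt (fun c : 𝕜 => Ring.inverse (1 - c • A) z) 0 :=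
    (apply 𝕜 E z).continuous.continuousAt.comp
      (hinv.comp (f := fun c : 𝕜 => 1 - c • A) (by fun_prop))
  convert hcont.tendsto using 2
  rw [zero_smul, sub_zero, Ring.inverse_one, one_apply_eq_self]

theorem inverse_one_sub_smul_apply_mem {L : Submodule 𝕜 E} (hL : IsClosed (L : Set E))
    {p z : E} (h : ∀ c : 𝕜, ‖c‖ < 1 → p + c • Ring.inverse (1 - c • A) z ∈ L)
    {c : 𝕜} (hc : ‖c‖ < 1) : Ring.inverse (1 - c • A) z ∈ L := by
  have hp : p ∈ L := by simpa using h 0 (by simp)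
  have hne : ∀ c : 𝕜, ‖c‖ < 1 → c ≠ 0 → Ring.inverse (1 - c • A) z ∈ L := fun c hc hc0 => by
    simpa [hc0] using L.smul_mem c⁻¹ (L.sub_mem (h c hc) hp)
  rcases eq_or_ne c 0 with rfl | hc0
  · -- `z` is the limit at `0` of `c ↦ (1 - c A)⁻¹ z`, which lies in `L` for `c ≠ 0`
    have hz : z ∈ L := hL.mem_of_tendsto
      ((tendsto_inverse_one_sub_smul_apply A z).mono_left nhdsWithin_le_nhds) <| by
        filter_upwards [nhdsWithin_le_nhds (Metric.ball_mem_nhds (0 : 𝕜) one_pos),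
          self_mem_nhdsWithin (s := {0}ᶜ)] with c hc hc0
        exact hne c (by simpa using hc) hc0
    simpa using hz
  · exact hne c hc hc0

theorem mem_and_pow_apply_mem_of_inverse_one_sub_smul_mem {L : Submodule 𝕜 E}
    (hL : IsClosed (L : Set E)) (hA : ‖A‖ ≤ 1) {p q : E}
    (h : ∀ c : 𝕜, ‖c‖ < 1 → Ring.inverse (1 - c • A) (p - c • q) ∈ L) :
    p ∈ L ∧ ∀ n : ℕ, (A ^ n) (A p - q) ∈ L := by
  have hres : ∀ n : ℕ, ∀ c : 𝕜, ‖c‖ < 1 → Ring.inverse (1 - c • A) ((A ^ n) (A p - q)) ∈ L := by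
    intro n
    induction n with
    | zero =>
      refine fun c hc => inverse_one_sub_smul_apply_mem hL (p := p) (fun c hc => ?_) hc
      convert h c hc using 1
      rw [pow_zero, one_apply_eq_self, map_sub _ p, map_smul, inverse_one_sub_smul_apply hA hc p,
        map_sub, smul_sub]
      abel
    | succ n ih =>
      refine fun c hc =>
        inverse_one_sub_smul_apply_mem hL (p := (A ^ n) (A p - q)) (fun c hc => ?_) hc
      rw [pow_succ', mul_apply_eq_comp, ← inverse_one_sub_smul_apply hA hc]
      exact ih c hc
  exact ⟨by simpa using h 0 (by simp), fun n => by simpa using hres n 0 (by simp)⟩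

end Resolvent

section CompletelyNonUnitary

variable {𝕜 E : Type*} [NontriviallyNormedField 𝕜] [NormedAddCommGroup E] [NormedSpace 𝕜 E]

def IsCompletelyNonUnitary (T : E →L[𝕜] E) : Prop :=
  ∀ 𝒦 : Submodule 𝕜 E, IsClosed (𝒦 : Set E) → (∀ v ∈ 𝒦, T v ∈ 𝒦) → (∀ v ∈ 𝒦, ‖T v‖ = ‖v‖) →
    T '' 𝒦 = 𝒦 → 𝒦 = ⊥

variable [CompleteSpace E]

theorem image_topologicalClosure_eq_of_image_eq (T : E →L[𝕜] E) {S : Submodule 𝕜 E}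
    (hS : T '' S = S) (hT : ∀ v ∈ S.topologicalClosure, ‖T v‖ = ‖v‖) :
    T '' S.topologicalClosure = S.topologicalClosure := by
  set M := S.topologicalClosure
  have : CompleteSpace M := S.isClosed_topologicalClosure.completeSpace_coe
  have hMS : (M : Set E) = closure S := S.topologicalClosure_coe
  have hclosed : IsClosed (T '' M) := by
    have hiso : Isometry fun v : M => T v :=
      AddMonoidHomClass.isometry_of_norm (T ∘L M.subtypeL) fun v => hT v v.2
    rw [Set.image_eq_range]
    exact hiso.isClosedEmbedding.isClosed_range
  apply subset_antisymm
  · calc T '' M = T '' closure S := by rw [hMS]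
      _ ⊆ closure (T '' S) := image_closure_subset_closure_image T.continuous
      _ = M := by rw [hS, hMS]
  · calc (M : Set E) = closure (T '' S) := by rw [hS, hMS]
      _ ⊆ T '' M := closure_minimal (Set.image_mono (hMS ▸ subset_closure)) hclosed

theorem IsCompletelyNonUnitary.eq_zero_of_orbit {T : E →L[𝕜] E} (hT : IsCompletelyNonUnitary T)
    {L : Submodule 𝕜 E} (hL : IsClosed (L : Set E)) (hiso : ∀ v ∈ L, ‖T v‖ = ‖v‖) {v : ℤ → E}
    (hv : ∀ n, T (v n) = v (n + 1)) (hvL : ∀ n, v n ∈ L) : v = 0 := by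
  set M := (Submodule.span 𝕜 (Set.range v)).topologicalClosure
  have hML : M ≤ L := Submodule.topologicalClosure_minimal _
    (Submodule.span_le.2 (Set.range_subset_iff.2 hvL)) hL
  have hshift : T '' Set.range v = Set.range v := by
    rw [← Set.range_comp, show ⇑T ∘ v = v ∘ (· + 1) from funext hv,
      (add_right_surjective 1).range_comp]
  have hspan : T '' Submodule.span 𝕜 (Set.range v) = Submodule.span 𝕜 (Set.range v) := by
    rw [← coe_coe, ← Submodule.map_coe, Submodule.map_span, coe_coe, hshift]
  have hM : T '' M = M :=
    image_topologicalClosure_eq_of_image_eq T hspan fun w hw => hiso w (hML hw)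
  have hM0 : M = ⊥ := hT M (Submodule.isClosed_topologicalClosure _)
    (fun w hw => hM.subset (Set.mem_image_of_mem T hw)) (fun w hw => hiso w (hML hw)) hM
  funext n
  have hvM : v n ∈ M := Submodule.le_topologicalClosure _ (Submodule.subset_span ⟨n, rfl⟩)
  rw [hM0] at hvM
  exact (Submodule.mem_bot 𝕜).1 hvM

end CompletelyNonUnitary

section Hilbert

variable {𝕜 H : Type*} [RCLike 𝕜] [NormedAddCommGroup H] [InnerProductSpace 𝕜 H]
  [CompleteSpace H]

theorem norm_apply_eq_of_adjoint_apply_apply {T : H →L[𝕜] H} {v : H}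
    (hv : adjoint T (T v) = v) : ‖T v‖ = ‖v‖ := by
  have h := T.apply_norm_sq_eq_inner_adjoint_left v
  rw [comp_apply, hv, inner_self_eq_norm_sq] at h
  exact (pow_left_inj₀ (norm_nonneg _) (norm_nonneg _) two_ne_zero).1 h

theorem adjoint_inverse_one_sub_smul (A : H →L[𝕜] H) (c : 𝕜) :
    adjoint (Ring.inverse (1 - conj c • A)) = Ring.inverse (1 - c • adjoint A) := by
  rw [← star_eq_adjoint, ← Ring.inverse_star, star_sub, star_one, star_smul, star_eq_adjoint,
    RCLike.star_def, RCLike.conj_conj]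

theorem inverse_one_sub_smul_adjoint_apply_mem {A : H →L[𝕜] H} {L : Submodule 𝕜 H}
    (hL : IsClosed (L : Set H)) {c : 𝕜} {p q : H}
    (h : ∀ g ∈ Lᗮ, ⟪Ring.inverse (1 - conj c • A) g, p⟫_𝕜
      = c * ⟪Ring.inverse (1 - conj c • A) g, q⟫_𝕜) :
    Ring.inverse (1 - c • adjoint A) (p - c • q) ∈ L := by
  rw [← hL.submodule_topologicalClosure_eq, ← Submodule.orthogonal_orthogonal_eq_closure,
    Submodule.mem_orthogonal, ← adjoint_inverse_one_sub_smul]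
  intro g hg
  rw [adjoint_inner_right, inner_sub_right, inner_smul_right, h g hg, sub_self]

theorem IsCompletelyNonUnitary.apply_eq_of_orbits {T : H →L[𝕜] H} (hT : IsCompletelyNonUnitary T)
    {x y : H} (hx : adjoint T (T x) = x) (hy : T (adjoint T y) = y)
    (hxy : ∀ n : ℕ, adjoint T (T ((T ^ n) (T x - y))) = (T ^ n) (T x - y))
    (hyx : ∀ n : ℕ, T (adjoint T ((adjoint T ^ n) (adjoint T y - x)))
      = (adjoint T ^ n) (adjoint T y - x)) :
    T x = y := by
  set K := LinearMap.ker ((1 - adjoint T ∘L T : H →L[𝕜] H) : H →ₗ[𝕜] H)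
  have memK (w : H) : w ∈ K ↔ adjoint T (T w) = w := mem_ker_one_sub_iff _ w
  -- the backward half of the orbit continues `T x - y` through `x - T† y`, since `T T† y = y`
  let v : ℤ → H
    | (n : ℕ) => (T ^ n) (T x - y)
    | Int.negSucc n => -(adjoint T ^ n) (adjoint T y - x)
  have hv : ∀ n, T (v n) = v (n + 1) := by
    rintro (n | (_ | n))
    · change T ((T ^ n) (T x - y)) = (T ^ (n + 1)) (T x - y)
      rw [pow_succ', mul_apply_eq_comp]
    · change T (-(adjoint T ^ 0) (adjoint T y - x)) = (T ^ 0) (T x - y)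
      simp only [pow_zero, one_apply_eq_self, map_sub, hy, neg_sub]
    · change T (-(adjoint T ^ (n + 1)) (adjoint T y - x)) = -(adjoint T ^ n) (adjoint T y - x)
      rw [pow_succ', mul_apply_eq_comp, map_neg, hyx n]
  have hvK : ∀ n, v n ∈ K := by
    rintro (n | (_ | n))
    · exact (memK _).2 (hxy n)
    · refine K.neg_mem ((memK _).2 ?_)
      simp only [pow_zero, one_apply_eq_self, map_sub, hy, hx]
    · refine K.neg_mem ((memK _).2 ?_)
      rw [pow_succ', mul_apply_eq_comp, hyx n]
  have hv0 := congrFun (hT.eq_zero_of_orbit (isClosed_ker _)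
    (fun w hw => norm_apply_eq_of_adjoint_apply_apply ((memK w).1 hw)) hv hvK) 0
  exact sub_eq_zero.1 hv0

end Hilbert

/-- Let `T` be a completely non-unitary contraction on `H`
(the only closed `T`-invariant subspace on which `T` restricts to a unitary
is `{0}`), `K = ker(Id − T*T)`, `K⋆ = ker(Id − TT*)`, and `x, y ∈ H`.
If for every `λ` with `|λ| < 1`:
(i) `⟨y, (Id − λ̄T)⁻¹f⟩ = λ⟨x, (Id − λ̄T)⁻¹f⟩` for all `f ∈ K⋆^⊥`, and
(ii) `⟨x, (Id − λ̄T*)⁻¹g⟩ = λ⟨y, (Id − λ̄T*)⁻¹g⟩` for all `g ∈ K^⊥`,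
then `x ∈ K` and `y = Tx`. (Paper inner products `⟨·,·⟩` are linear in the
first variable, i.e. `⟨u,v⟩ = ⟪v,u⟫_ℂ` in Mathlib's convention; the inverses
are `Ring.inverse`.) -/
theorem mem_graph_of_eigen_relations
    {H : Type*} [NormedAddCommGroup H] [InnerProductSpace ℂ H] [CompleteSpace H]
    (T : H →L[ℂ] H) (hT : ‖T‖ ≤ 1)
    (hcnu : ∀ 𝒦 : Submodule ℂ H, IsClosed (𝒦 : Set H) →
      (∀ v ∈ 𝒦, T v ∈ 𝒦) → (∀ v ∈ 𝒦, ‖T v‖ = ‖v‖) →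
      T '' (𝒦 : Set H) = (𝒦 : Set H) → 𝒦 = ⊥)
    (K Ks : Submodule ℂ H)
    (hK : K = LinearMap.ker (((1 - adjoint T ∘L T : H →L[ℂ] H) : H →ₗ[ℂ] H)))
    (hKs : Ks = LinearMap.ker (((1 - T ∘L adjoint T : H →L[ℂ] H) : H →ₗ[ℂ] H)))
    (x y : H)
    (h1 : ∀ (lam : ℂ), ‖lam‖ < 1 → ∀ f ∈ Ksᗮ,
      ⟪Ring.inverse (1 - (conj lam) • T) f, y⟫_ℂ
        = lam * ⟪Ring.inverse (1 - (conj lam) • T) f, x⟫_ℂ)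
    (h2 : ∀ (lam : ℂ), ‖lam‖ < 1 → ∀ g ∈ Kᗮ,
      ⟪Ring.inverse (1 - (conj lam) • adjoint T) g, x⟫_ℂ
        = lam * ⟪Ring.inverse (1 - (conj lam) • adjoint T) g, y⟫_ℂ) :
    x ∈ K ∧ y = T x := by
  subst hK hKs
  have hT' : ‖adjoint T‖ ≤ 1 := by rwa [LinearIsometryEquiv.norm_map]
  obtain ⟨hxK, hxy⟩ := mem_and_pow_apply_mem_of_inverse_one_sub_smul_mem (isClosed_ker _) hT
    fun c hc => by
      simpa only [adjoint_adjoint] using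
        inverse_one_sub_smul_adjoint_apply_mem (isClosed_ker _) (h2 c hc)
  obtain ⟨hyKs, hyx⟩ := mem_and_pow_apply_mem_of_inverse_one_sub_smul_mem (isClosed_ker _)
    hT' fun c hc => inverse_one_sub_smul_adjoint_apply_mem (isClosed_ker _) (h1 c hc)
  simp only [mem_ker_one_sub_iff, comp_apply] at hyKs hxy hyx
  exact ⟨hxK, (IsCompletelyNonUnitary.apply_eq_of_orbits hcnu
    ((mem_ker_one_sub_iff _ _).1 hxK) hyKs hxy hyx).symm⟩
end
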